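/- Let 0 ≤ β < 1 and let Ḡ_0, …, Ḡ_T and Δ_0, …, Δ_T be matrices in ℝ^{m×n}. Set G_t = Ḡ_t + Δ_t and define the momentum M_t = Σ_{i=0}^{t} β^{t−i} G_i for t = 0, …, T. Then Σ_{t=1}^{T} ‖M_t − Ḡ_t‖_* ≤ (β/(1−β)) Σ_{t=0}^{T−1} ‖Ḡ_t‖_* + (1/(1−β)) Σ_{t=0}^{T} ‖Δ_t‖_*. -/

import Mathlib

open Matrix

noncomputable def nuclearNorm {m n : ℕ} (A : Matrix (Fin m) (Fin n) ℝ) : ℝ :=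
  ((((Matrix.posSemidef_conjTranspose_mul_self A).1.eigenvectorUnitary : Matrix (Fin n) (Fin n) ℝ) *
    diagonal ((√·) ∘ (Matrix.posSemidef_conjTranspose_mul_self A).1.eigenvalues) *
    (star ((Matrix.posSemidef_conjTranspose_mul_self A).1.eigenvectorUnitary : Matrix (Fin n) (Fin n) ℝ)))).trace

variable {m n : ℕ}

noncomputable def mcol (X : Matrix (Fin m) (Fin n) ℝ) (j : Fin n) : EuclideanSpace ℝ (Fin m) :=
  WithLp.toLp 2 (fun i => X i j)

noncomputable def colNorm (X : Matrix (Fin m) (Fin n) ℝ) (j : Fin n) : ℝ :=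
  Real.sqrt ((Xᴴ * X) j j)

lemma ctm_apply (X : Matrix (Fin m) (Fin n) ℝ) (j : Fin n) :
    (Xᴴ * X) j j = ∑ i, X i j ^ 2 := by
  simp [Matrix.mul_apply, conjTranspose_apply, sq]

lemma ctm_nonneg (X : Matrix (Fin m) (Fin n) ℝ) (j : Fin n) : 0 ≤ (Xᴴ * X) j j := by
  rw [ctm_apply]; positivity

lemma colNorm_nonneg (X : Matrix (Fin m) (Fin n) ℝ) (j : Fin n) : 0 ≤ colNorm X j :=
  Real.sqrt_nonneg _

lemma sq_colNorm (X : Matrix (Fin m) (Fin n) ℝ) (j : Fin n) :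
    colNorm X j ^ 2 = (Xᴴ * X) j j :=
  Real.sq_sqrt (ctm_nonneg X j)

lemma colNorm_eq_norm (X : Matrix (Fin m) (Fin n) ℝ) (j : Fin n) :
    colNorm X j = ‖mcol X j‖ := by
  rw [EuclideanSpace.norm_eq, colNorm, ctm_apply]
  congr 1
  exact Finset.sum_congr rfl fun i _ => by simp [mcol, Real.norm_eq_abs, sq_abs]

lemma trace_ctm_le (X Y : Matrix (Fin m) (Fin n) ℝ) :
    trace (Xᴴ * Y) ≤ ∑ j, colNorm X j * colNorm Y j := by
  rw [Matrix.trace]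
  refine Finset.sum_le_sum fun j _ => ?_
  have h : (Xᴴ * Y).diag j = inner (𝕜 := ℝ) (mcol X j) (mcol Y j) := by
    simp [Matrix.diag, Matrix.mul_apply, conjTranspose_apply, PiLp.inner_apply, mcol, mul_comm]
  rw [h, colNorm_eq_norm, colNorm_eq_norm]
  exact real_inner_le_norm _ _

lemma nuclearNorm_eq_sum (A : Matrix (Fin m) (Fin n) ℝ) :
    nuclearNorm A = ∑ j, Real.sqrt
      ((Matrix.posSemidef_conjTranspose_mul_self A).isHermitian.eigenvalues j) := by
  set hH := (Matrix.posSemidef_conjTranspose_mul_self A).isHermitian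
  unfold nuclearNorm
  rw [trace_mul_cycle, Unitary.coe_star_mul_self, one_mul, trace_diagonal]
  simp

lemma nuclearNorm_nonneg (A : Matrix (Fin m) (Fin n) ℝ) : 0 ≤ nuclearNorm A := by
  rw [nuclearNorm_eq_sum]
  exact Finset.sum_nonneg fun j _ => Real.sqrt_nonneg _

lemma star_mul_diag_mul (A : Matrix (Fin m) (Fin n) ℝ) :
    ((Matrix.posSemidef_conjTranspose_mul_self A).isHermitian.eigenvectorUnitary :
        Matrix (Fin n) (Fin n) ℝ)ᴴ * (Aᴴ * A) *
      ((Matrix.posSemidef_conjTranspose_mul_self A).isHermitian.eigenvectorUnitary :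
        Matrix (Fin n) (Fin n) ℝ)
      = diagonal ((Matrix.posSemidef_conjTranspose_mul_self A).isHermitian.eigenvalues) := by
  have := (Matrix.posSemidef_conjTranspose_mul_self A).isHermitian.conjStarAlgAut_star_eigenvectorUnitary
  simp only [Unitary.conjStarAlgAut_apply, Unitary.coe_star, star_star] at this
  rw [Matrix.star_eq_conjTranspose] at this
  exact this

lemma colNorm_mul_eigen (A : Matrix (Fin m) (Fin n) ℝ) (j : Fin n) :
    colNorm (A * ((Matrix.posSemidef_conjTranspose_mul_self A).isHermitian.eigenvectorUnitary :
        Matrix (Fin n) (Fin n) ℝ)) j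
      = Real.sqrt ((Matrix.posSemidef_conjTranspose_mul_self A).isHermitian.eigenvalues j) := by
  set hH := (Matrix.posSemidef_conjTranspose_mul_self A).isHermitian
  set V : Matrix (Fin n) (Fin n) ℝ := (hH.eigenvectorUnitary : Matrix (Fin n) (Fin n) ℝ)
  have h : (A * V)ᴴ * (A * V) = diagonal hH.eigenvalues := by
    rw [conjTranspose_mul]
    calc Vᴴ * Aᴴ * (A * V) = Vᴴ * (Aᴴ * A) * V := by
          simp only [Matrix.mul_assoc]
      _ = diagonal hH.eigenvalues := star_mul_diag_mul A
  rw [colNorm, h, diagonal_apply_eq]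

lemma quad_conj (B M : Matrix (Fin n) (Fin n) ℝ) (x : Fin n → ℝ) :
    star x ⬝ᵥ ((Bᴴ * M * B) *ᵥ x) = star (B *ᵥ x) ⬝ᵥ (M *ᵥ (B *ᵥ x)) := by
  simp only [star_mulVec, Matrix.dotProduct_mulVec, vecMul_vecMul, Matrix.mul_assoc]

lemma trace_le_nuclearNorm (U A : Matrix (Fin m) (Fin n) ℝ)
    (hU : ∀ x : Fin n → ℝ, star x ⬝ᵥ ((Uᴴ * U) *ᵥ x) ≤ star x ⬝ᵥ x) :
    trace (Uᴴ * A) ≤ nuclearNorm A := by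
  set hH := (Matrix.posSemidef_conjTranspose_mul_self A).isHermitian
  set V : Matrix (Fin n) (Fin n) ℝ := (hH.eigenvectorUnitary : Matrix (Fin n) (Fin n) ℝ)
    with hVdef
  have hVV' : V * Vᴴ = 1 := by
    rw [← Matrix.star_eq_conjTranspose]
    exact (Matrix.mem_unitaryGroup_iff).mp hH.eigenvectorUnitary.2
  have hVV : Vᴴ * V = 1 := by
    rw [← Matrix.star_eq_conjTranspose]
    exact Unitary.coe_star_mul_self hH.eigenvectorUnitary
  -- columns of V have unit norm
  have hcolV : ∀ j, colNorm (U * V) j ≤ 1 := by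
    intro j
    have h1 : colNorm (U * V) j ^ 2 ≤ 1 := by
      rw [sq_colNorm]
      have he : (U * V)ᴴ * (U * V) = Vᴴ * (Uᴴ * U) * V := by
        rw [conjTranspose_mul]; simp only [Matrix.mul_assoc]
      have hq : (Vᴴ * (Uᴴ * U) * V) j j
          = star (V *ᵥ Pi.single j 1) ⬝ᵥ ((Uᴴ * U) *ᵥ (V *ᵥ Pi.single j 1)) := by
        have := quad_conj V (Uᴴ * U) (Pi.single j 1)
        rw [← this]
        simp [Matrix.mulVec_single, dotProduct, Pi.single_apply, Matrix.mulVec]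
      have h2 := hU (V *ᵥ Pi.single j 1)
      have h3 : star (V *ᵥ Pi.single j 1) ⬝ᵥ (V *ᵥ Pi.single j 1) = 1 := by
        have h4 := quad_conj V 1 (Pi.single j 1)
        rw [Matrix.mul_one, hVV, one_mulVec, one_mulVec] at h4
        rw [← h4]
        simp [dotProduct, Pi.single_apply]
      rw [he, hq]
      rw [h3] at h2
      exact h2
    nlinarith [colNorm_nonneg (U * V) j]
  have key : trace ((U * V)ᴴ * (A * V)) = trace (Uᴴ * A) := by
    rw [conjTranspose_mul]
    rw [show Vᴴ * Uᴴ * (A * V) = Vᴴ * ((Uᴴ * A) * V) by simp only [Matrix.mul_assoc]]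
    rw [Matrix.trace_mul_comm, Matrix.mul_assoc, hVV', Matrix.mul_one]
  rw [← key, nuclearNorm_eq_sum]
  calc trace ((U * V)ᴴ * (A * V)) ≤ ∑ j, colNorm (U * V) j * colNorm (A * V) j :=
        trace_ctm_le _ _
    _ ≤ ∑ j, Real.sqrt (hH.eigenvalues j) := by
        refine Finset.sum_le_sum fun j _ => ?_
        have := colNorm_mul_eigen A j
        rw [← this]
        calc colNorm (U * V) j * colNorm (A * V) j ≤ 1 * colNorm (A * V) j :=
              mul_le_mul_of_nonneg_right (hcolV j) (colNorm_nonneg _ _)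
          _ = colNorm (A * V) j := one_mul _

lemma nuclearNorm_add_le (A B : Matrix (Fin m) (Fin n) ℝ) :
    nuclearNorm (A + B) ≤ nuclearNorm A + nuclearNorm B := by
  set C := A + B with hCdef
  set hH := (Matrix.posSemidef_conjTranspose_mul_self C).isHermitian with hHdef
  set V : Matrix (Fin n) (Fin n) ℝ := (hH.eigenvectorUnitary : Matrix (Fin n) (Fin n) ℝ)
    with hVdef
  set μ := hH.eigenvalues with hμdef
  have hμ0 : ∀ j, 0 ≤ μ j :=
    (Matrix.posSemidef_conjTranspose_mul_self C).eigenvalues_nonneg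
  have hVV' : V * Vᴴ = 1 := by
    rw [← Matrix.star_eq_conjTranspose]
    exact (Matrix.mem_unitaryGroup_iff).mp hH.eigenvectorUnitary.2
  have hVV : Vᴴ * V = 1 := by
    rw [← Matrix.star_eq_conjTranspose]
    exact Unitary.coe_star_mul_self hH.eigenvectorUnitary
  have hdiag : Vᴴ * (Cᴴ * C) * V = diagonal μ := star_mul_diag_mul C
  set sp : Fin n → ℝ := fun j => if μ j = 0 then 0 else (Real.sqrt (μ j))⁻¹ with hspdef
  set S := V * diagonal sp * Vᴴ with hSdef
  set U := C * S with hUdef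
  have hSH : Sᴴ = S := by
    rw [hSdef, conjTranspose_mul, conjTranspose_mul, diagonal_conjTranspose,
      conjTranspose_conjTranspose]
    have : star sp = sp := by funext j; simp
    rw [this]
    simp only [Matrix.mul_assoc]
  have hUC : trace (Uᴴ * C) = nuclearNorm C := by
    rw [hUdef, conjTranspose_mul, hSH, nuclearNorm_eq_sum]
    have e1 : S * Cᴴ * C = (V * diagonal sp) * (Vᴴ * Cᴴ * C) := by
      rw [hSdef]; simp only [Matrix.mul_assoc]
    rw [e1, Matrix.trace_mul_comm]
    have e2 : Vᴴ * Cᴴ * C * (V * diagonal sp) = diagonal μ * diagonal sp := by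
      rw [← hdiag]; simp only [Matrix.mul_assoc]
    rw [e2, diagonal_mul_diagonal, trace_diagonal]
    refine Finset.sum_congr rfl fun j _ => ?_
    show μ j * sp j = Real.sqrt (μ j)
    by_cases h : μ j = 0
    · simp [hspdef, h]
    · have hpos : 0 < μ j := lt_of_le_of_ne (hμ0 j) (Ne.symm h)
      have hs0 : Real.sqrt (μ j) ≠ 0 := ne_of_gt (Real.sqrt_pos.mpr hpos)
      have h2 : Real.sqrt (μ j) * Real.sqrt (μ j) = μ j := Real.mul_self_sqrt (hμ0 j)
      simp only [hspdef, if_neg h]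
      field_simp
      rw [sq, h2]
  have hUU : Uᴴ * U = V * diagonal (fun j => sp j * μ j * sp j) * Vᴴ := by
    rw [hUdef, conjTranspose_mul, hSH]
    calc S * Cᴴ * (C * S) = V * diagonal sp * ((Vᴴ * (Cᴴ * C) * V) * diagonal sp) * Vᴴ := by
          rw [hSdef]; simp only [Matrix.mul_assoc]
      _ = V * diagonal sp * (diagonal μ * diagonal sp) * Vᴴ := by rw [hdiag]
      _ = V * (diagonal sp * diagonal μ * diagonal sp) * Vᴴ := by
          simp only [Matrix.mul_assoc]
      _ = V * diagonal (fun j => sp j * μ j * sp j) * Vᴴ := by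
          rw [diagonal_mul_diagonal, diagonal_mul_diagonal]
  have he1 : ∀ j, sp j * μ j * sp j ≤ 1 := by
    intro j
    by_cases h : μ j = 0
    · simp [hspdef, h]
    · have hpos : 0 < μ j := lt_of_le_of_ne (hμ0 j) (Ne.symm h)
      have hs0 : Real.sqrt (μ j) ≠ 0 := ne_of_gt (Real.sqrt_pos.mpr hpos)
      have h2 : Real.sqrt (μ j) * Real.sqrt (μ j) = μ j := Real.mul_self_sqrt (hμ0 j)
      simp only [hspdef, if_neg h]
      rw [show (Real.sqrt (μ j))⁻¹ * μ j * (Real.sqrt (μ j))⁻¹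
          = μ j / (Real.sqrt (μ j) * Real.sqrt (μ j)) by ring, h2, div_self h]
  have hU : ∀ x : Fin n → ℝ, star x ⬝ᵥ ((Uᴴ * U) *ᵥ x) ≤ star x ⬝ᵥ x := by
    intro x
    rw [hUU]
    have hq := quad_conj Vᴴ (diagonal fun j => sp j * μ j * sp j) x
    rw [conjTranspose_conjTranspose] at hq
    rw [hq]
    have hq1 := quad_conj Vᴴ 1 x
    rw [conjTranspose_conjTranspose, Matrix.mul_one, hVV', one_mulVec, one_mulVec] at hq1
    rw [hq1]
    set y := Vᴴ *ᵥ x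
    have hy : ∀ (z : Fin n → ℝ), star z = z := by
      intro z; funext i; simp
    rw [hy]
    simp only [dotProduct, Matrix.mulVec_diagonal]
    refine Finset.sum_le_sum fun j _ => ?_
    have := he1 j
    nlinarith [sq_nonneg (y j)]
  calc nuclearNorm C = trace (Uᴴ * C) := hUC.symm
    _ = trace (Uᴴ * A) + trace (Uᴴ * B) := by rw [hCdef, Matrix.mul_add, trace_add]
    _ ≤ nuclearNorm A + nuclearNorm B :=
        add_le_add (trace_le_nuclearNorm U A hU) (trace_le_nuclearNorm U B hU)

lemma posSemidef_smul {k : ℕ} {M : Matrix (Fin k) (Fin k) ℝ} (hM : M.PosSemidef) {c : ℝ}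
    (hc : 0 ≤ c) : (c • M).PosSemidef := by
  exact hM.smul hc

lemma nuclearNorm_smul (c : ℝ) (hc : 0 ≤ c) (A : Matrix (Fin m) (Fin n) ℝ) :
    nuclearNorm (c • A) = c * nuclearNorm A := by
  have key : ∀ B : Matrix (Fin m) (Fin n) ℝ, nuclearNorm B = trace (cfc Real.sqrt (Bᴴ * B)) := by
    intro B
    rw [(posSemidef_conjTranspose_mul_self B).isHermitian.cfc_eq, IsHermitian.cfc,
      Unitary.conjStarAlgAut_apply]
    rfl
  have hsa : IsSelfAdjoint (Aᴴ * A) := (posSemidef_conjTranspose_mul_self A).isHermitian.isSelfAdjoint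
  have hM : (c • A)ᴴ * (c • A) = (c * c) • (Aᴴ * A) := by
    rw [conjTranspose_smul, Matrix.smul_mul, Matrix.mul_smul, smul_smul]; simp
  have hf : (fun x => Real.sqrt ((c * c) • x)) = fun x => c * Real.sqrt x := by
    funext x; rw [smul_eq_mul, Real.sqrt_mul (mul_self_nonneg c), Real.sqrt_mul_self hc]
  rw [key, key, hM, ← cfc_comp_smul (c * c) Real.sqrt (Aᴴ * A) (ha := hsa), hf, cfc_const_mul c Real.sqrt (Aᴴ * A),
    trace_smul, smul_eq_mul]

lemma nuclearNorm_zero : nuclearNorm (0 : Matrix (Fin m) (Fin n) ℝ) = 0 := by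
  have := nuclearNorm_smul 0 le_rfl (0 : Matrix (Fin m) (Fin n) ℝ)
  simpa using this

lemma nuclearNorm_sum_le {ι : Type*} (s : Finset ι) (f : ι → Matrix (Fin m) (Fin n) ℝ) :
    nuclearNorm (∑ i ∈ s, f i) ≤ ∑ i ∈ s, nuclearNorm (f i) := by
  classical
  induction s using Finset.induction_on with
  | empty => simp [nuclearNorm_zero]
  | @insert a s h ih =>
      rw [Finset.sum_insert h, Finset.sum_insert h]
      exact le_trans (nuclearNorm_add_le _ _) (by linarith)

theorem momentum_bias_bound
    {m n : ℕ} (T : ℕ) (β : ℝ) (hβ0 : 0 ≤ β) (hβ1 : β < 1)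
    (Gbar Δ : ℕ → Matrix (Fin m) (Fin n) ℝ) :
    ∑ t ∈ Finset.Icc 1 T,
        nuclearNorm ((∑ i ∈ Finset.range (t + 1), β ^ (t - i) • (Gbar i + Δ i)) - Gbar t)
      ≤ (β / (1 - β)) * ∑ t ∈ Finset.range T, nuclearNorm (Gbar t)
        + (1 / (1 - β)) * ∑ t ∈ Finset.range (T + 1), nuclearNorm (Δ t) := by
  have h1β : 0 < 1 - β := by linarith
  set g : ℕ → ℝ := fun i => nuclearNorm (Gbar i) with hg
  set d : ℕ → ℝ := fun i => nuclearNorm (Δ i) with hd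
  have hg0 : ∀ i, 0 ≤ g i := fun i => nuclearNorm_nonneg _
  have hd0 : ∀ i, 0 ≤ d i := fun i => nuclearNorm_nonneg _
  have hgd0 : ∀ i, 0 ≤ g i + d i := fun i => add_nonneg (hg0 i) (hd0 i)
  -- geometric tail bound
  have hgeom : ∀ i : ℕ, (∑ t ∈ Finset.Icc (i+1) T, β^(t-i)) ≤ β/(1-β) := by
    intro i
    have e1 : ∑ t ∈ Finset.Icc (i+1) T, β^(t-i) = ∑ k ∈ Finset.range (T - i), β^(k+1) := by
      apply Finset.sum_nbij' (i := fun t => t - (i+1)) (j := fun k => k + (i+1))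
      · intro a ha; simp only [Finset.mem_Icc, Finset.mem_range] at *; omega
      · intro a ha; simp only [Finset.mem_Icc, Finset.mem_range] at *; omega
      · intro a ha; simp only [Finset.mem_Icc, Finset.mem_range] at *; omega
      · intro a ha; simp only [Finset.mem_Icc, Finset.mem_range] at *; omega
      · intro a ha
        simp only [Finset.mem_Icc] at ha
        congr 1
        omega
    rw [e1]
    have e2 : ∑ k ∈ Finset.range (T-i), β^(k+1) = β * ∑ k ∈ Finset.range (T-i), β^k := by
      rw [Finset.mul_sum]
      exact Finset.sum_congr rfl fun k _ => by ring
    rw [e2]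
    have hsum : ∑ k ∈ Finset.range (T-i), β^k ≤ 1/(1-β) := by
      rw [geom_sum_eq (ne_of_lt hβ1)]
      have e3 : (β^(T-i) - 1)/(β-1) = (1 - β^(T-i))/(1-β) := by
        rw [div_eq_div_iff (by linarith) (by linarith)]
        ring
      rw [e3]
      have : (1 : ℝ) - β^(T-i) ≤ 1 := by
        have : (0:ℝ) ≤ β^(T-i) := pow_nonneg hβ0 _
        linarith
      exact (div_le_div_iff_of_pos_right h1β).mpr this
    calc β * ∑ k ∈ Finset.range (T-i), β^k ≤ β * (1/(1-β)) :=
          mul_le_mul_of_nonneg_left hsum hβ0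
      _ = β/(1-β) := by ring
  -- pointwise bound
  have hpt : ∀ t ∈ Finset.Icc 1 T,
      nuclearNorm ((∑ i ∈ Finset.range (t + 1), β ^ (t - i) • (Gbar i + Δ i)) - Gbar t)
        ≤ (∑ i ∈ Finset.range t, β^(t-i) * (g i + d i)) + d t := by
    intro t ht
    have hsplit : (∑ i ∈ Finset.range (t+1), β^(t-i) • (Gbar i + Δ i)) - Gbar t
        = (∑ i ∈ Finset.range t, β^(t-i) • (Gbar i + Δ i)) + Δ t := by
      rw [Finset.sum_range_succ, Nat.sub_self, pow_zero, one_smul]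
      abel
    rw [hsplit]
    calc nuclearNorm ((∑ i ∈ Finset.range t, β^(t-i) • (Gbar i + Δ i)) + Δ t)
        ≤ nuclearNorm (∑ i ∈ Finset.range t, β^(t-i) • (Gbar i + Δ i)) + d t :=
          nuclearNorm_add_le _ _
      _ ≤ (∑ i ∈ Finset.range t, nuclearNorm (β^(t-i) • (Gbar i + Δ i))) + d t := by
          have := nuclearNorm_sum_le (Finset.range t) (fun i => β^(t-i) • (Gbar i + Δ i))
          linarith
      _ ≤ (∑ i ∈ Finset.range t, β^(t-i) * (g i + d i)) + d t := by
          have : ∀ i ∈ Finset.range t, nuclearNorm (β^(t-i) • (Gbar i + Δ i))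
              ≤ β^(t-i) * (g i + d i) := by
            intro i _
            rw [nuclearNorm_smul _ (pow_nonneg hβ0 _)]
            exact mul_le_mul_of_nonneg_left (nuclearNorm_add_le _ _) (pow_nonneg hβ0 _)
          linarith [Finset.sum_le_sum this]
  have swap : (∑ t ∈ Finset.Icc 1 T, ∑ i ∈ Finset.range t, β^(t-i) * (g i + d i))
      = ∑ i ∈ Finset.range T, ∑ t ∈ Finset.Icc (i+1) T, β^(t-i) * (g i + d i) := by
    apply Finset.sum_comm'
    intro t i
    simp only [Finset.mem_Icc, Finset.mem_range]
    omega
  have hsub : Finset.Icc 1 T ⊆ Finset.range (T+1) := by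
    intro t ht
    simp only [Finset.mem_Icc] at ht
    simp only [Finset.mem_range]
    omega
  calc ∑ t ∈ Finset.Icc 1 T,
        nuclearNorm ((∑ i ∈ Finset.range (t + 1), β ^ (t - i) • (Gbar i + Δ i)) - Gbar t)
      ≤ ∑ t ∈ Finset.Icc 1 T, ((∑ i ∈ Finset.range t, β^(t-i) * (g i + d i)) + d t) :=
        Finset.sum_le_sum hpt
    _ = (∑ t ∈ Finset.Icc 1 T, ∑ i ∈ Finset.range t, β^(t-i) * (g i + d i))
        + ∑ t ∈ Finset.Icc 1 T, d t := Finset.sum_add_distrib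
    _ = (∑ i ∈ Finset.range T, ∑ t ∈ Finset.Icc (i+1) T, β^(t-i) * (g i + d i))
        + ∑ t ∈ Finset.Icc 1 T, d t := by rw [swap]
    _ ≤ (∑ i ∈ Finset.range T, (β/(1-β)) * (g i + d i)) + ∑ t ∈ Finset.range (T+1), d t := by
        apply add_le_add
        · refine Finset.sum_le_sum fun i _ => ?_
          rw [← Finset.sum_mul]
          exact mul_le_mul_of_nonneg_right (hgeom i) (hgd0 i)
        · exact Finset.sum_le_sum_of_subset_of_nonneg hsub (fun t _ _ => hd0 t)
    _ = (β/(1-β)) * (∑ i ∈ Finset.range T, g i) + ((β/(1-β)) * (∑ i ∈ Finset.range T, d i)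
        + ∑ t ∈ Finset.range (T+1), d t) := by
        simp only [mul_add, Finset.sum_add_distrib, ← Finset.mul_sum]
        ring
    _ ≤ (β/(1-β)) * (∑ i ∈ Finset.range T, g i) + ((β/(1-β)) * (∑ i ∈ Finset.range (T+1), d i)
        + ∑ t ∈ Finset.range (T+1), d t) := by
        have hmono : (∑ i ∈ Finset.range T, d i) ≤ ∑ i ∈ Finset.range (T+1), d i := by
          rw [Finset.sum_range_succ]
          linarith [hd0 T]
        have hcoef : (0:ℝ) ≤ β/(1-β) := div_nonneg hβ0 (le_of_lt h1β)
        have := mul_le_mul_of_nonneg_left hmono hcoef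
        linarith
    _ = (β / (1 - β)) * ∑ t ∈ Finset.range T, g t + (1 / (1 - β)) * ∑ t ∈ Finset.range (T + 1), d t := by
        have hc : β/(1-β) + 1 = 1/(1-β) := by field_simp; ring
        rw [← hc]
        ring
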